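/- Let q₁,…,q_N > 0. As α → ∞, the maximizer structure of ∑_n U_α(q_n) tends to max-min fairness in the following precise sense: for two quality vectors q, q' ∈ (0,∞)^N with min_n q_n > min_n q'_n, there exists α₀ such that for all α > α₀ (α ≠ 1), ∑_n U_α(q_n) > ∑_n U_α(q'_n), where U_α(q) = q^{1-α}/(1-α). -/

import Mathlib

/-!
For `α > 1` the objective is `∑ q_n ^ (1 - α)` divided by the negative number `1 - α`, so it suffices
to compare the sums of negative powers. With `m = min q > m' = min q'`, the sum for `q` is at most
`N * m ^ (1 - α)` and the sum for `q'` is at least `m' ^ (1 - α)`; their ratio `(m / m') ^ (α - 1)`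
tends to infinity, so it eventually exceeds `N`.
-/

open Filter Finset

theorem eventually_mul_rpow_one_sub_lt (c : ℝ) {a b : ℝ} (hb : 0 < b) (hba : b < a) :
    ∀ᶠ α : ℝ in atTop, c * a ^ (1 - α) < b ^ (1 - α) := by
  have ha : 0 < a := hb.trans hba
  have hlim : Tendsto (fun α : ℝ => (b / a) ^ (1 - α)) atTop atTop :=
    (tendsto_rpow_atBot_of_base_lt_one _ (div_pos hb ha) ((div_lt_one ha).2 hba)).comp
      (tendsto_atBot_add_const_left _ 1 tendsto_neg_atTop_atBot)
  filter_upwards [hlim.eventually_gt_atTop c] with α hα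
  rwa [Real.div_rpow hb.le ha.le, lt_div_iff₀ (Real.rpow_pos_of_pos ha _)] at hα

theorem inf'_rpow_le_sum_rpow {ι : Type*} {s : Finset ι} (hs : s.Nonempty) {f : ι → ℝ}
    (hf : ∀ i ∈ s, 0 ≤ f i) (r : ℝ) : s.inf' hs f ^ r ≤ ∑ i ∈ s, f i ^ r := by
  obtain ⟨i, hi, hmin⟩ := s.exists_mem_eq_inf' hs f
  rw [hmin]
  exact single_le_sum (fun j hj => Real.rpow_nonneg (hf j hj) r) hi

theorem sum_rpow_le_card_mul_inf'_rpow {ι : Type*} {s : Finset ι} (hs : s.Nonempty) {f : ι → ℝ}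
    (hpos : 0 < s.inf' hs f) {r : ℝ} (hr : r ≤ 0) :
    ∑ i ∈ s, f i ^ r ≤ #s * s.inf' hs f ^ r := by
  rw [← nsmul_eq_mul]
  exact sum_le_card_nsmul _ _ _ fun i hi => Real.rpow_le_rpow_of_nonpos hpos (inf'_le f hi) hr

theorem alpha_fair_maxmin_general (N : ℕ) (hN : 0 < N) (q q' : Fin N → ℝ)
    (hq' : ∀ n, 0 < q' n)
    (hmin : (Finset.univ.inf' (univ_nonempty_iff.mpr ⟨⟨0, hN⟩⟩) q') <
      Finset.univ.inf' (univ_nonempty_iff.mpr ⟨⟨0, hN⟩⟩) q) :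
    ∃ α₀ : ℝ, ∀ α : ℝ, α₀ < α → α ≠ 1 →
      ∑ n, q' n ^ (1 - α) / (1 - α) < ∑ n, q n ^ (1 - α) / (1 - α) := by
  set hne : (univ : Finset (Fin N)).Nonempty := univ_nonempty_iff.mpr ⟨⟨0, hN⟩⟩
  have hpos' : 0 < univ.inf' hne q' := (lt_inf'_iff _).2 fun n _ => hq' n
  obtain ⟨α₀, hα₀⟩ := eventually_atTop.1 <| (eventually_gt_atTop (1 : ℝ)).and <|
    eventually_mul_rpow_one_sub_lt (N : ℝ) hpos' hmin
  refine ⟨α₀, fun α hα _ => ?_⟩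
  obtain ⟨hα1, hdom⟩ := hα₀ α hα.le
  rw [← sum_div, ← sum_div]
  refine div_lt_div_of_neg_of_lt (by linarith) ?_
  calc ∑ n, q n ^ (1 - α)
      ≤ N * univ.inf' hne q ^ (1 - α) := by
        simpa using sum_rpow_le_card_mul_inf'_rpow hne (hpos'.trans hmin) (by linarith)
    _ < univ.inf' hne q' ^ (1 - α) := hdom
    _ ≤ ∑ n, q' n ^ (1 - α) := inf'_rpow_le_sum_rpow hne (fun n _ => (hq' n).le) _

/-- As α → ∞ the α-fairness objective tends to max-min fairness: if the
minimum entry of q is strictly larger than the minimum entry of q', then for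
all sufficiently large α (α ≠ 1) the α-fair objective strictly prefers q. -/
theorem alpha_fair_maxmin (N : ℕ) (hN : 0 < N) (q q' : Fin N → ℝ)
    (hq : ∀ n, 0 < q n) (hq' : ∀ n, 0 < q' n)
    (hmin : (Finset.univ.inf' (univ_nonempty_iff.mpr ⟨⟨0, hN⟩⟩) q') <
      Finset.univ.inf' (univ_nonempty_iff.mpr ⟨⟨0, hN⟩⟩) q) :
    ∃ α₀ : ℝ, ∀ α : ℝ, α₀ < α → α ≠ 1 →
      ∑ n, q' n ^ (1 - α) / (1 - α) < ∑ n, q n ^ (1 - α) / (1 - α) :=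
  alpha_fair_maxmin_general N hN q q' hq' hmin
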